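/- arXiv:2506.22193 — 3 statements merged into one kernel-verified Lean document; each statement's English description precedes it below -/
import Mathlib

section
/- Let $m \in \mathbb{N}$ with $m \geq 2$ and $W_m(x) := (1-x^2)^m$. Then there exist constants $c_1>0$ and $q\in(0,1)$ such that for all $-1 \leq r \leq t \leq -1+q$ one has $W_m(t) - W_m(r) \geq c_1 (t-r)(1+r)^{m-1} + c_1 (t-r)^m$. -/
open Finset in
lemma aux_pow_sub_11 (m : ℕ) (a b A B : ℝ) (ha : 0 ≤ a) (hab : a ≤ b)
    (haA : a ≤ A) (hbB : b ≤ B) (hd : b - a ≤ B - A) :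
    b ^ m - a ^ m ≤ B ^ m - A ^ m := by
  have hb : 0 ≤ b := le_trans ha hab
  have hA : 0 ≤ A := le_trans ha haA
  have hB : 0 ≤ B := le_trans hb hbB
  rw [← geom_sum₂_mul, ← geom_sum₂_mul]
  apply mul_le_mul
  · apply Finset.sum_le_sum
    intro i _
    exact mul_le_mul (pow_le_pow_left₀ hb hbB i) (pow_le_pow_left₀ ha haA _)
      (pow_nonneg ha _) (pow_nonneg hB _)
  · exact hd
  · linarith
  · apply Finset.sum_nonneg
    intro i _
    exact mul_nonneg (pow_nonneg hB _) (pow_nonneg hA _)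

/-- Growth condition near the well `-1` for the degenerate potential
`W_m(x) = (1-x²)^m`, `m ∈ ℕ`, `m ≥ 2`. -/
theorem stmt_11 (m : ℕ) (hm : 2 ≤ m) :
    ∃ c₁ : ℝ, 0 < c₁ ∧ ∃ q ∈ Set.Ioo (0:ℝ) 1,
      ∀ r t : ℝ, -1 ≤ r → r ≤ t → t ≤ -1 + q →
        c₁ * (t - r) * (1 + r) ^ (m - 1) + c₁ * (t - r) ^ m ≤
          (1 - t ^ 2) ^ m - (1 - r ^ 2) ^ m := by
  refine ⟨1/2, by norm_num, 1/2, ⟨by norm_num, by norm_num⟩, ?_⟩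
  intro r t hr hrt ht
  set a : ℝ := 1 + r with hadef
  set b : ℝ := 1 + t with hbdef
  have ha : 0 ≤ a := by simp [hadef]; linarith
  have hab : a ≤ b := by simp [hadef, hbdef]; linarith
  have hb1 : b ≤ 1/2 := by simp [hbdef]; linarith
  have hb : 0 ≤ b := le_trans ha hab
  set A : ℝ := (2 - a) * a with hAdef
  set B : ℝ := (2 - b) * b with hBdef
  have h1 : b ^ m - a ^ m ≤ B ^ m - A ^ m := by
    apply aux_pow_sub_11 m a b A B ha hab
    · nlinarith
    · nlinarith
    · nlinarith
  have h2 : (b - a) * a ^ (m - 1) ≤ b ^ m - a ^ m := by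
    rw [← geom_sum₂_mul]
    rw [mul_comm (b-a)]
    apply mul_le_mul_of_nonneg_right _ (by linarith)
    calc a ^ (m - 1) = b ^ 0 * a ^ (m - 1 - 0) := by simp
      _ ≤ ∑ i ∈ Finset.range m, b ^ i * a ^ (m - 1 - i) := by
          apply Finset.single_le_sum (f := fun i => b ^ i * a ^ (m - 1 - i))
          · intro i _
            exact mul_nonneg (pow_nonneg hb _) (pow_nonneg ha _)
          · exact Finset.mem_range.mpr (by omega)
  have h3 : (b - a) ^ m ≤ b ^ m - a ^ m := by
    have := pow_add_pow_le ha (by linarith : (0:ℝ) ≤ b - a) (by omega : m ≠ 0)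
    have hba : a + (b - a) = b := by ring
    rw [hba] at this
    linarith
  have e1 : (1 : ℝ) - t ^ 2 = B := by rw [hBdef, hbdef]; ring
  have e2 : (1 : ℝ) - r ^ 2 = A := by rw [hAdef, hadef]; ring
  have e3 : t - r = b - a := by rw [hadef, hbdef]; ring
  rw [e1, e2, e3]
  clear_value a b A B
  nlinarith [h1, h2, h3]
end

section
/- Let $p\in(1,+\infty)$ and $v\in L^p(\mathbb{R}^n)$. There exists a constant $C_{n,p}>0$ such that for every vector $h\in\mathbb{R}^n\setminus\{0\}$, every bounded open $\Omega'\subset\mathbb{R}^n$, and every $\rho\in(0,|h|]$, the translation difference satisfies $\|\tau_h v - v\|_{L^p(\Omega')}^p \leq C_{n,p}\,\frac{|h|^p}{\rho^{n+p}}\int_{B_\rho}\|\tau_y v - v\|_{L^p(\Omega'_{|h|})}^p\,dy$, where $\tau_h v(x) := v(x+h)$ and $\Omega'_{|h|} := \{x : \mathrm{dist}(x,\Omega') \le |h|\}$. -/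
/-!
Set `δ = h / N` with `N ≈ 2|h|/ρ`, so that `ρ/4 ≤ |δ| ≤ ρ/2`. For every `y` with `|y| < ρ/4`,
the chain `τ_h v - v = ∑_{k<N} τ_{kδ} (τ_δ v - v)` and the splitting
`τ_δ v - v = τ_{-y} (τ_{y+δ} v - v) - τ_{-y} (τ_y v - v)` give, by Minkowski and translation
invariance of Lebesgue measure,
`‖τ_h v - v‖_{L^p(Ω')} ≤ N (‖τ_{y+δ} v - v‖_{L^p(Ω'_{|h|})} + ‖τ_y v - v‖_{L^p(Ω'_{|h|})})`.
Both `y + δ` and `y` lie in `B_ρ`; raising to the power `p` and averaging over `y ∈ B_{ρ/4}`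
yields the estimate with a constant of order `N^p / ρ^n ≲ |h|^p / ρ^(n+p)`.
-/

open MeasureTheory Metric Set
open scoped ENNReal

lemma eLpNorm_ofReal_rpow_eq_lintegral {α ε : Type*} [MeasurableSpace α] [ENorm ε]
    {μ : Measure α} {f : α → ε} {p : ℝ} (hp : 0 < p) :
    eLpNorm f (ENNReal.ofReal p) μ ^ p = ∫⁻ x, ‖f x‖ₑ ^ p ∂μ := by
  rw [eLpNorm_eq_lintegral_rpow_enorm_toReal (by simpa using hp) ENNReal.ofReal_ne_top,
    ENNReal.toReal_ofReal hp.le, one_div, ENNReal.rpow_inv_rpow hp.ne']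

lemma exists_nat_mul_le_and_le_mul {a ρ : ℝ} (hρ : 0 < ρ) (hρa : ρ ≤ a) :
    ∃ N : ℕ, 0 < N ∧ N * ρ ≤ 4 * a ∧ 2 * a ≤ N * ρ := by
  have ha : 0 < a := hρ.trans_le hρa
  have hlo : 2 * a / ρ ≤ ⌈2 * a / ρ⌉₊ := Nat.le_ceil _
  have hhi : (⌈2 * a / ρ⌉₊ : ℝ) < 2 * a / ρ + 1 := Nat.ceil_lt_add_one (by positivity)
  refine ⟨⌈2 * a / ρ⌉₊, Nat.ceil_pos.mpr (by positivity), ?_, ?_⟩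
  · have := (lt_div_iff₀ hρ).mp (by linarith : (⌈2 * a / ρ⌉₊ : ℝ) - 1 < 2 * a / ρ)
    nlinarith
  · exact (div_le_iff₀ hρ).mp hlo

lemma two_mul_rpow_div_le_of_mul_le {N ρ a m p : ℝ} (d : ℕ) (hN : 0 ≤ N) (hρ : 0 < ρ)
    (hm : 0 < m) (hp : 0 ≤ p) (hNρ : N * ρ ≤ 4 * a) :
    (2 * N) ^ p / ((ρ / 4) ^ d * m) ≤ 8 ^ p * 4 ^ d / m * a ^ p / ρ ^ ((d : ℝ) + p) := by
  have ha : 0 ≤ a := by nlinarith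
  calc (2 * N) ^ p / ((ρ / 4) ^ d * m) ≤ (8 * a / ρ) ^ p / ((ρ / 4) ^ d * m) := by
        gcongr
        rw [le_div_iff₀ hρ]
        linarith
    _ = 8 ^ p * 4 ^ d / m * a ^ p / ρ ^ ((d : ℝ) + p) := by
        rw [Real.div_rpow (by positivity) hρ.le, Real.mul_rpow (by norm_num) ha,
          Real.rpow_add hρ, Real.rpow_natCast, div_pow]
        field_simp

section Translation

variable {E F : Type*} [NormedAddCommGroup E] [MeasurableSpace E] [BorelSpace E]
  [NormedAddCommGroup F] {μ : Measure E} [μ.IsAddRightInvariant]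

lemma eLpNorm_comp_add_right_le (g : E → F) (p : ℝ≥0∞) {c : E} {s t : Set E}
    (hst : ∀ x ∈ s, x + c ∈ t) :
    eLpNorm (fun x => g (x + c)) p (μ.restrict s) ≤ eLpNorm g p (μ.restrict t) := by
  have hc := (measurePreserving_add_right μ c).restrict_preimage_emb
    (measurableEmbedding_addRight c) t
  calc eLpNorm (fun x => g (x + c)) p (μ.restrict s)
      ≤ eLpNorm (g ∘ (· + c)) p (μ.restrict ((· + c) ⁻¹' t)) :=
        eLpNorm_mono_measure _ (Measure.restrict_mono hst le_rfl)
    _ = eLpNorm g p (μ.restrict t) := by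
        rw [← (measurableEmbedding_addRight c).eLpNorm_map_measure, hc.map_eq]

variable {f : E → F}

lemma MeasureTheory.StronglyMeasurable.sub_comp_add (hf : StronglyMeasurable f) (y : E) :
    StronglyMeasurable fun x => f (x + y) - f x :=
  (hf.comp_measurable (measurable_add_const y)).sub hf

lemma eLpNorm_sub_comp_add_nsmul_le {p : ℝ≥0∞} (hp : 1 ≤ p) (hf : StronglyMeasurable f)
    (N : ℕ) (δ : E) {s t : Set E} (hst : ∀ k < N, ∀ x ∈ s, x + k • δ ∈ t) :
    eLpNorm (fun x => f (x + N • δ) - f x) p (μ.restrict s) ≤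
      N * eLpNorm (fun x => f (x + δ) - f x) p (μ.restrict t) := by
  set g : E → F := fun x => f (x + δ) - f x
  have htele :
      (fun x => f (x + N • δ) - f x) = ∑ k ∈ Finset.range N, fun x => g (x + k • δ) := by
    ext x
    simp only [Finset.sum_apply, g, add_assoc, ← succ_nsmul]
    rw [Finset.sum_range_sub (fun k => f (x + k • δ)), zero_nsmul, add_zero]
  calc eLpNorm (fun x => f (x + N • δ) - f x) p (μ.restrict s)
      = eLpNorm (∑ k ∈ Finset.range N, fun x => g (x + k • δ)) p (μ.restrict s) := by
        rw [htele]
    _ ≤ ∑ k ∈ Finset.range N, eLpNorm (fun x => g (x + k • δ)) p (μ.restrict s) :=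
        eLpNorm_sum_le (fun k _ => ((hf.sub_comp_add δ).comp_measurable
          (measurable_add_const _)).aestronglyMeasurable) hp
    _ ≤ ∑ _k ∈ Finset.range N, eLpNorm g p (μ.restrict t) :=
        Finset.sum_le_sum fun k hk =>
          eLpNorm_comp_add_right_le g p (hst k (Finset.mem_range.mp hk))
    _ = N * eLpNorm g p (μ.restrict t) := by simp

lemma eLpNorm_sub_comp_add_le_add {p : ℝ≥0∞} (hp : 1 ≤ p) (hf : StronglyMeasurable f)
    (δ y : E) {t A : Set E} (hy : ∀ x ∈ t, x - y ∈ A) :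
    eLpNorm (fun x => f (x + δ) - f x) p (μ.restrict t) ≤
      eLpNorm (fun x => f (x + (y + δ)) - f x) p (μ.restrict A) +
        eLpNorm (fun x => f (x + y) - f x) p (μ.restrict A) := by
  set G : E → F := fun x => f (x + (y + δ)) - f x
  set H : E → F := fun x => f (x + y) - f x
  have hsplit : (fun x => f (x + δ) - f x) = (fun x => G (x + -y)) - fun x => H (x + -y) := by
    ext x
    simp only [Pi.sub_apply, G, H, add_assoc, neg_add_cancel_left, neg_add_cancel, add_zero,
      sub_sub_sub_cancel_right]
  have hy' : ∀ x ∈ t, x + -y ∈ A := by simpa only [← sub_eq_add_neg] using hy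
  rw [hsplit]
  refine (eLpNorm_sub_le ?_ ?_ hp).trans
      (add_le_add (eLpNorm_comp_add_right_le G p hy') (eLpNorm_comp_add_right_le H p hy')) <;>
    exact ((hf.sub_comp_add _).comp_measurable (measurable_add_const _)).aestronglyMeasurable

lemma eLpNorm_sub_comp_add_nsmul_le_of_norm_le {p : ℝ≥0∞} (hp : 1 ≤ p)
    (hf : StronglyMeasurable f) {N : ℕ} (hN : 0 < N) {δ y : E} (hy : ‖y‖ ≤ ‖δ‖) (s : Set E) :
    eLpNorm (fun x => f (x + N • δ) - f x) p (μ.restrict s) ≤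
      N * (eLpNorm (fun x => f (x + (y + δ)) - f x) p
          (μ.restrict (cthickening (N * ‖δ‖) s)) +
        eLpNorm (fun x => f (x + y) - f x) p (μ.restrict (cthickening (N * ‖δ‖) s))) := by
  set t := cthickening ((N - 1 : ℕ) * ‖δ‖) s
  have hchain : ∀ k < N, ∀ x ∈ s, x + k • δ ∈ t := fun k hk x hx =>
    mem_cthickening_of_dist_le _ x _ s hx <| by
      rw [dist_eq_norm, add_sub_cancel_left]
      exact norm_nsmul_le.trans (by gcongr; omega)
  have hshift : ∀ x ∈ t, x - y ∈ cthickening (N * ‖δ‖) s := by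
    intro x hx
    have hxy : x - y ∈ cthickening ‖y‖ t :=
      mem_cthickening_of_dist_le _ x _ t hx (by rw [dist_eq_norm, sub_sub_cancel_left, norm_neg])
    refine cthickening_mono ?_ s
      (cthickening_cthickening_subset (norm_nonneg y) (by positivity) s hxy)
    have : ((N - 1 : ℕ) : ℝ) = N - 1 := by rw [Nat.cast_sub hN, Nat.cast_one]
    rw [this]
    nlinarith
  exact (eLpNorm_sub_comp_add_nsmul_le hp hf N δ hchain).trans
    (by gcongr; exact eLpNorm_sub_comp_add_le_add hp hf δ y hshift)

lemma setLIntegral_enorm_sub_comp_add_nsmul_rpow_le {p : ℝ} (hp : 1 ≤ p)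
    (hf : StronglyMeasurable f) {N : ℕ} (hN : 0 < N) {δ y : E} (hy : ‖y‖ ≤ ‖δ‖) (s : Set E) :
    ∫⁻ x in s, ‖f (x + N • δ) - f x‖ₑ ^ p ∂μ ≤
      N ^ p * 2 ^ (p - 1) *
        (∫⁻ x in cthickening (N * ‖δ‖) s, ‖f (x + (y + δ)) - f x‖ₑ ^ p ∂μ +
          ∫⁻ x in cthickening (N * ‖δ‖) s, ‖f (x + y) - f x‖ₑ ^ p ∂μ) := by
  have hp0 : 0 < p := one_pos.trans_le hp
  have hq : 1 ≤ ENNReal.ofReal p := by simpa using hp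
  simp only [← eLpNorm_ofReal_rpow_eq_lintegral hp0]
  calc eLpNorm (fun x => f (x + N • δ) - f x) (ENNReal.ofReal p) (μ.restrict s) ^ p
      ≤ (N * (eLpNorm (fun x => f (x + (y + δ)) - f x) (ENNReal.ofReal p)
            (μ.restrict (cthickening (N * ‖δ‖) s)) +
          eLpNorm (fun x => f (x + y) - f x) (ENNReal.ofReal p)
            (μ.restrict (cthickening (N * ‖δ‖) s)))) ^ p := by
        gcongr
        exact eLpNorm_sub_comp_add_nsmul_le_of_norm_le hq hf hN hy s
    _ ≤ _ := by
        rw [ENNReal.mul_rpow_of_nonneg _ _ hp0.le, mul_assoc]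
        gcongr
        exact ENNReal.rpow_add_le_mul_rpow_add_rpow _ _ hp

omit [μ.IsAddRightInvariant] in
lemma measurable_setLIntegral_enorm_sub_comp_add_rpow [SecondCountableTopology E] [SFinite μ]
    (hf : StronglyMeasurable f) (p : ℝ) (A : Set E) :
    Measurable fun y => ∫⁻ x in A, ‖f (x + y) - f x‖ₑ ^ p ∂μ :=
  Measurable.lintegral_prod_right' (f := fun z : E × E => ‖f (z.2 + z.1) - f z.2‖ₑ ^ p)
    (((hf.comp_measurable (measurable_snd.add measurable_fst)).sub
      (hf.comp_measurable measurable_snd)).enorm.pow_const p)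

omit [NormedAddCommGroup F] in
lemma mul_measure_ball_le_of_forall_mem_ball {Φ : E → ℝ≥0∞} (hΦ : Measurable Φ)
    {X K : ℝ≥0∞} {δ : E} {r ρ : ℝ} (hδ : ‖δ‖ + r ≤ ρ)
    (hX : ∀ y ∈ ball (0 : E) r, X ≤ K * (Φ (y + δ) + Φ y)) :
    X * μ (ball 0 r) ≤ 2 * K * ∫⁻ y in ball 0 ρ, Φ y ∂μ := by
  have hshift : ∫⁻ y in ball 0 r, Φ (y + δ) ∂μ ≤ ∫⁻ y in ball 0 ρ, Φ y ∂μ := by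
    rw [← (measurePreserving_add_right μ δ).setLIntegral_comp_preimage_emb
      (measurableEmbedding_addRight δ) Φ (ball 0 ρ)]
    refine lintegral_mono_set fun y hy => ?_
    rw [mem_ball_zero_iff] at hy
    rw [mem_preimage, mem_ball_zero_iff]
    linarith [norm_add_le y δ]
  calc X * μ (ball 0 r) = ∫⁻ _ in ball 0 r, X ∂μ := (setLIntegral_const _ _).symm
    _ ≤ ∫⁻ y in ball 0 r, K * (Φ (y + δ) + Φ y) ∂μ :=
        setLIntegral_mono (by fun_prop) hX
    _ = K * (∫⁻ y in ball 0 r, Φ (y + δ) ∂μ + ∫⁻ y in ball 0 r, Φ y ∂μ) := by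
        rw [lintegral_const_mul _ (by fun_prop), lintegral_add_left (by fun_prop)]
    _ ≤ K * (∫⁻ y in ball 0 ρ, Φ y ∂μ + ∫⁻ y in ball 0 ρ, Φ y ∂μ) := by
        gcongr
        linarith [norm_nonneg δ]
    _ = 2 * K * ∫⁻ y in ball 0 ρ, Φ y ∂μ := by ring

variable [NormedSpace ℝ E] [SecondCountableTopology E] [SFinite μ]

theorem setLIntegral_enorm_sub_comp_add_rpow_mul_measure_ball_le {p : ℝ} (hp : 1 ≤ p)
    (hf : StronglyMeasurable f) {h : E} (s : Set E) {ρ : ℝ} {N : ℕ} (hN : 0 < N)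
    (hNρ : N * ρ ≤ 4 * ‖h‖) (hρN : 2 * ‖h‖ ≤ N * ρ) :
    (∫⁻ x in s, ‖f (x + h) - f x‖ₑ ^ p ∂μ) * μ (ball 0 (ρ / 4)) ≤
      2 * (N ^ p * 2 ^ (p - 1)) *
        ∫⁻ y in ball 0 ρ, ∫⁻ x in cthickening ‖h‖ s, ‖f (x + y) - f x‖ₑ ^ p ∂μ ∂μ := by
  have hN' : (0 : ℝ) < N := Nat.cast_pos.mpr hN
  set δ : E := (N : ℝ)⁻¹ • h
  have hNδ : N • δ = h := by rw [← Nat.cast_smul_eq_nsmul ℝ, smul_inv_smul₀ hN'.ne']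
  have hδ : N * ‖δ‖ = ‖h‖ := by
    rw [norm_smul, norm_inv, Real.norm_natCast, mul_inv_cancel_left₀ hN'.ne']
  have hδlo : ρ / 4 ≤ ‖δ‖ := by
    by_contra! H
    nlinarith [mul_lt_mul_of_pos_left H hN']
  have hδhi : ‖δ‖ + ρ / 4 ≤ ρ := by
    by_contra! H
    nlinarith [mul_lt_mul_of_pos_left H hN']
  refine mul_measure_ball_le_of_forall_mem_ball
    (measurable_setLIntegral_enorm_sub_comp_add_rpow hf p _) hδhi fun y hy => ?_
  have := setLIntegral_enorm_sub_comp_add_nsmul_rpow_le (μ := μ) hp hf hN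
    ((mem_ball_zero_iff.mp hy).le.trans hδlo) s
  rwa [hNδ, hδ] at this

end Translation

lemma ENNReal.two_mul_rpow_sub_one (p : ℝ) : (2 : ℝ≥0∞) * 2 ^ (p - 1) = 2 ^ p := by
  nth_rewrite 1 [← ENNReal.rpow_one 2]
  rw [← ENNReal.rpow_add _ _ two_ne_zero ENNReal.ofNat_ne_top, add_sub_cancel]

theorem setLIntegral_enorm_sub_comp_add_rpow_le {E F : Type*} [NormedAddCommGroup E]
    [NormedSpace ℝ E] [FiniteDimensional ℝ E] [MeasurableSpace E] [BorelSpace E]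
    [NormedAddCommGroup F] (μ : Measure E) [μ.IsAddHaarMeasure] {p : ℝ} (hp : 1 ≤ p)
    {f : E → F} (hf : StronglyMeasurable f) {h : E} (s : Set E) {ρ : ℝ} (hρ : 0 < ρ)
    (hρh : ρ ≤ ‖h‖) :
    ∫⁻ x in s, ‖f (x + h) - f x‖ₑ ^ p ∂μ ≤
      ENNReal.ofReal (8 ^ p * 4 ^ Module.finrank ℝ E / (μ (ball 0 1)).toReal * ‖h‖ ^ p /
          ρ ^ ((Module.finrank ℝ E : ℝ) + p)) *
        ∫⁻ y in ball 0 ρ, ∫⁻ x in cthickening ‖h‖ s, ‖f (x + y) - f x‖ₑ ^ p ∂μ ∂μ := by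
  set d := Module.finrank ℝ E
  set m := (μ (ball (0 : E) 1)).toReal
  set I := ∫⁻ y in ball 0 ρ, ∫⁻ x in cthickening ‖h‖ s, ‖f (x + y) - f x‖ₑ ^ p ∂μ ∂μ
  have hp0 : 0 < p := one_pos.trans_le hp
  have hm : 0 < m :=
    ENNReal.toReal_pos (measure_ball_pos μ _ one_pos).ne' measure_ball_lt_top.ne
  obtain ⟨N, hN, hNρ, hρN⟩ := exists_nat_mul_le_and_le_mul hρ hρh
  have havg :=
    setLIntegral_enorm_sub_comp_add_rpow_mul_measure_ball_le (μ := μ) hp hf s hN hNρ hρN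
  have hball : μ (ball 0 (ρ / 4)) = ENNReal.ofReal ((ρ / 4) ^ d * m) := by
    rw [Measure.addHaar_ball_of_pos μ 0 (by positivity), ENNReal.ofReal_mul (by positivity),
      ENNReal.ofReal_toReal measure_ball_lt_top.ne]
  have hconst : 2 * (N ^ p * 2 ^ (p - 1)) = ENNReal.ofReal ((2 * N) ^ p) := by
    rw [mul_left_comm, ENNReal.two_mul_rpow_sub_one, mul_comm,
      ← ENNReal.mul_rpow_of_nonneg _ _ hp0.le,
      ← ENNReal.ofReal_rpow_of_nonneg (by positivity) hp0.le, ENNReal.ofReal_mul zero_le_two,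
      ENNReal.ofReal_ofNat, ENNReal.ofReal_natCast]
  rw [hball, hconst] at havg
  calc ∫⁻ x in s, ‖f (x + h) - f x‖ₑ ^ p ∂μ
      ≤ ENNReal.ofReal ((2 * N) ^ p) * I / ENNReal.ofReal ((ρ / 4) ^ d * m) :=
        (ENNReal.le_div_iff_mul_le (.inl (by simp; positivity)) (.inl ENNReal.ofReal_ne_top)).mpr
          havg
    _ = ENNReal.ofReal ((2 * N) ^ p / ((ρ / 4) ^ d * m)) * I := by
        rw [ENNReal.ofReal_div_of_pos (by positivity), ENNReal.mul_div_right_comm]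
    _ ≤ _ := by
        gcongr ENNReal.ofReal ?_ * _
        exact two_mul_rpow_div_le_of_mul_le d N.cast_nonneg hρ hm hp0.le hNρ

theorem stmt_16_general (n : ℕ) (p : ℝ) (hp : 1 < p)
    (v : EuclideanSpace ℝ (Fin n) → ℝ) (hv : Measurable v) :
    ∃ C : ℝ, 0 < C ∧ ∀ h : EuclideanSpace ℝ (Fin n), h ≠ 0 →
      ∀ Ω' : Set (EuclideanSpace ℝ (Fin n)), IsOpen Ω' → Bornology.IsBounded Ω' →
        ∀ ρ : ℝ, 0 < ρ → ρ ≤ ‖h‖ →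
          (∫⁻ x in Ω', ENNReal.ofReal (|v (x + h) - v x| ^ p)) ≤
            ENNReal.ofReal (C * ‖h‖ ^ p / ρ ^ ((n : ℝ) + p)) *
              ∫⁻ y in ball (0 : EuclideanSpace ℝ (Fin n)) ρ,
                ∫⁻ x in cthickening ‖h‖ Ω', ENNReal.ofReal (|v (x + y) - v x| ^ p) := by
  have hm : 0 < (volume (ball (0 : EuclideanSpace ℝ (Fin n)) 1)).toReal :=
    ENNReal.toReal_pos (measure_ball_pos _ _ one_pos).ne' measure_ball_lt_top.ne
  refine ⟨8 ^ p * 4 ^ n / (volume (ball (0 : EuclideanSpace ℝ (Fin n)) 1)).toReal,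
    by positivity, fun h _ Ω' _ _ ρ hρ hρh => ?_⟩
  have hofReal : ∀ r : ℝ, ENNReal.ofReal (|r| ^ p) = ‖r‖ₑ ^ p := fun r => by
    rw [Real.enorm_eq_ofReal_abs, ENNReal.ofReal_rpow_of_nonneg (abs_nonneg r) (by linarith)]
  simpa only [hofReal, finrank_euclideanSpace_fin] using
    setLIntegral_enorm_sub_comp_add_rpow_le volume hp.le hv.stronglyMeasurable Ω' hρ hρh

/-- Translation estimate: the `L^p(Ω')` norm of `τ_h v - v` is controlled by the
average over `B_ρ` of the `L^p` norms of translations on the `|h|`-neighborhood. -/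
theorem stmt_16 (n : ℕ) (hn : 1 ≤ n) (p : ℝ) (hp : 1 < p)
    (v : EuclideanSpace ℝ (Fin n) → ℝ) (hv : Measurable v)
    (hvLp : MemLp v (ENNReal.ofReal p) volume) :
    ∃ C : ℝ, 0 < C ∧ ∀ h : EuclideanSpace ℝ (Fin n), h ≠ 0 →
      ∀ Ω' : Set (EuclideanSpace ℝ (Fin n)), IsOpen Ω' → Bornology.IsBounded Ω' →
        ∀ ρ : ℝ, 0 < ρ → ρ ≤ ‖h‖ →
          (∫⁻ x in Ω', ENNReal.ofReal (|v (x + h) - v x| ^ p)) ≤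
            ENNReal.ofReal (C * ‖h‖ ^ p / ρ ^ ((n : ℝ) + p)) *
              ∫⁻ y in ball (0 : EuclideanSpace ℝ (Fin n)) ρ,
                ∫⁻ x in cthickening ‖h‖ Ω', ENNReal.ofReal (|v (x + y) - v x| ^ p) :=
  stmt_16_general n p hp v hv
end

section
/- Let $p\in(1,+\infty)$, $s\in(0,1)$, $v\in L^p(\mathbb{R}^n)$, and $\Omega'\subset\mathbb{R}^n$ bounded and open. Then there exists a constant $\bar C_{n,p}>0$, independent of $s$, such that for every $h\in\mathbb{R}^n$, $\|\tau_h v - v\|_{L^p(\Omega')}^p \leq \bar C_{n,p}\, |h|^{sp}\, (1-s)\int_{B_{|h|}} \frac{\|\tau_y v - v\|_{L^p(\Omega'_{|h|})}^p}{|y|^{n+sp}}\,dy$, where $\tau_h v(x):=v(x+h)$ and $\Omega'_{|h|}$ is the $|h|$-neighborhood of $\Omega'$. -/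
/-!
Write `w_m = 2^{-m} h`. Since `|a - c|^p ≤ 2^{p-1} (|a - b|^p + |b - c|^p)`, halving a
translation costs at most a factor `2^p`, so `‖τ_h v - v‖^p_{L^p(Ω')} ≤ 2^{pm} ‖τ_{w_m} v - v‖^p`
on a thickening of `Ω'` by less than `|h|`. Splitting `w_m = y + (w_m - y)` and averaging over
the ball `D_m` of radius `|w_m|/8` about `w_m/2`, which the reflection `y ↦ w_m - y` preserves,
bounds this by `2^p` times the mean of `‖τ_y v - v‖^p_{L^p(Ω'_{|h|})}` over `D_m`. As
`|y| ≤ |w_m|` on `D_m`, each scale gives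
`‖τ_h v - v‖^p ≤ 2^{p(1-s)m} · 2^p 8^n |h|^{sp} |B_1|⁻¹ ∫_{D_m} ‖τ_y v - v‖^p |y|^{-n-sp} dy`.
The balls `D_m` are disjoint and lie in `B_{|h|}`, so summing these bounds against the weights
`2^{-p(1-s)m}` yields the factor `1 - 2^{-p(1-s)} ≤ p (1 - s) log 2`.
-/

open MeasureTheory Metric
open scoped ENNReal

noncomputable def translationDiff {E : Type*} [Add E] [MeasurableSpace E] (μ : Measure E)
    (v : E → ℝ) (p : ℝ) (S : Set E) (y : E) : ℝ≥0∞ :=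
  ∫⁻ x in S, ENNReal.ofReal (|v (x + y) - v x| ^ p) ∂μ

theorem ENNReal.ofReal_abs_sub_rpow_le {p : ℝ} (hp : 1 ≤ p) (a b c : ℝ) :
    ENNReal.ofReal (|a - c| ^ p) ≤
      2 ^ (p - 1) * (ENNReal.ofReal (|a - b| ^ p) + ENNReal.ofReal (|b - c| ^ p)) := by
  have hp₀ : 0 ≤ p := zero_le_one.trans hp
  simp only [← ENNReal.ofReal_rpow_of_nonneg (abs_nonneg _) hp₀]
  calc ENNReal.ofReal |a - c| ^ p
      ≤ (ENNReal.ofReal |a - b| + ENNReal.ofReal |b - c|) ^ p := by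
        gcongr
        rw [← ENNReal.ofReal_add (abs_nonneg _) (abs_nonneg _)]
        exact ENNReal.ofReal_le_ofReal (abs_sub_le _ _ _)
    _ ≤ _ := ENNReal.rpow_add_le_mul_rpow_add_rpow _ _ hp

theorem ENNReal.two_rpow_sub_one_mul_add_self (p : ℝ) (x : ℝ≥0∞) :
    2 ^ (p - 1) * (x + x) = 2 ^ p * x := by
  rw [← two_mul, ← mul_assoc, ENNReal.rpow_sub _ _ two_ne_zero ENNReal.ofNat_ne_top,
    ENNReal.rpow_one, ENNReal.div_mul_cancel two_ne_zero ENNReal.ofNat_ne_top]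

theorem ENNReal.le_mul_tsum_of_le_pow_mul {θ x : ℝ≥0∞} (hθ : 1 < θ) (hθ' : θ ≠ ⊤)
    (a : ℕ → ℝ≥0∞) (h : ∀ m, x ≤ θ ^ m * a m) : x ≤ (1 - θ⁻¹) * ∑' m, a m := by
  have hθ₀ : θ ≠ 0 := (zero_lt_one.trans hθ).ne'
  have hpow : ∀ m, θ⁻¹ ^ m * x ≤ a m := fun m =>
    calc θ⁻¹ ^ m * x ≤ θ⁻¹ ^ m * (θ ^ m * a m) := by gcongr; exact h m
      _ = a m := by
        rw [← mul_assoc, ← mul_pow, ENNReal.inv_mul_cancel hθ₀ hθ', one_pow, one_mul]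
  have hsum : (1 - θ⁻¹)⁻¹ * x ≤ ∑' m, a m := by
    rw [← ENNReal.tsum_geometric, ← ENNReal.tsum_mul_right]
    exact ENNReal.tsum_le_tsum hpow
  rwa [ENNReal.inv_mul_le_iff (tsub_pos_of_lt (ENNReal.inv_lt_one.2 hθ)).ne'
    (ENNReal.sub_ne_top ENNReal.one_ne_top)] at hsum

theorem Real.one_sub_inv_rpow_le {b : ℝ} (hb : 0 < b) (x : ℝ) :
    1 - (b ^ x)⁻¹ ≤ Real.log b * x := by
  rw [Real.rpow_def_of_pos hb, ← Real.exp_neg]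
  linarith [Real.one_sub_le_exp_neg (Real.log b * x)]

theorem add_mem_cthickening {E : Type*} [SeminormedAddCommGroup E] {A : Set E} {r r' : ℝ}
    {x : E} (hx : x ∈ cthickening r A) (hr : 0 ≤ r) {y : E} (hy : ‖y‖ + r ≤ r') :
    x + y ∈ cthickening r' A :=
  cthickening_mono hy A <| cthickening_cthickening_subset (norm_nonneg y) hr A <|
    mem_cthickening_of_dist_le _ x _ _ hx (dist_self_add_left y x).le

theorem setLIntegral_le_ofReal_rpow_mul_setLIntegral_div {E : Type*} [SeminormedAddGroup E]
    [MeasurableSpace E] {μ : Measure E} {D : Set E} (hD : MeasurableSet D) {r α : ℝ}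
    (hα : 0 ≤ α) (hDr : ∀ y ∈ D, 0 < ‖y‖ ∧ ‖y‖ ≤ r) (F : E → ℝ≥0∞) :
    ∫⁻ y in D, F y ∂μ ≤
      ENNReal.ofReal (r ^ α) * ∫⁻ y in D, F y / ENNReal.ofReal (‖y‖ ^ α) ∂μ := by
  rw [← lintegral_const_mul' _ _ ENNReal.ofReal_ne_top]
  refine setLIntegral_mono' hD fun y hy => ?_
  obtain ⟨hy₀, hyr⟩ := hDr y hy
  calc F y = ENNReal.ofReal (‖y‖ ^ α) * (F y / ENNReal.ofReal (‖y‖ ^ α)) :=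
        (ENNReal.mul_div_cancel (by simp; positivity) ENNReal.ofReal_ne_top).symm
    _ ≤ ENNReal.ofReal (r ^ α) * (F y / ENNReal.ofReal (‖y‖ ^ α)) := by gcongr

section TranslationDiff

variable {E : Type*} [NormedAddCommGroup E] [MeasurableSpace E] {μ : Measure E} {v : E → ℝ}
  {p : ℝ}

theorem translationDiff_mono_set {S T : Set E} (hST : S ⊆ T) (y : E) :
    translationDiff μ v p S y ≤ translationDiff μ v p T y :=
  lintegral_mono_set hST

theorem measurable_translationDiff [MeasurableAdd₂ E] [SFinite μ] (hv : Measurable v)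
    (S : Set E) : Measurable (translationDiff μ v p S) :=
  Measurable.lintegral_prod_right' <|
    (((hv.comp (measurable_snd.add measurable_fst)).sub (hv.comp measurable_snd)).abs.pow_const
      p).ennreal_ofReal

theorem setLIntegral_comp_add_right_le [MeasurableAdd E] [μ.IsAddRightInvariant]
    {S T : Set E} (a : E) (hST : ∀ x ∈ S, x + a ∈ T) (g : E → ℝ≥0∞) :
    ∫⁻ x in S, g (x + a) ∂μ ≤ ∫⁻ x in T, g x ∂μ :=
  calc ∫⁻ x in S, g (x + a) ∂μ ≤ ∫⁻ x in (· + a) ⁻¹' T, g (x + a) ∂μ := lintegral_mono_set hST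
    _ = ∫⁻ x in T, g x ∂μ :=
      (measurePreserving_add_right μ a).setLIntegral_comp_preimage_emb
        (measurableEmbedding_addRight a) g T

theorem translationDiff_add_le [MeasurableAdd E] [μ.IsAddRightInvariant] (hv : Measurable v)
    (hp : 1 ≤ p) {S T : Set E} (hST : S ⊆ T) (a b : E) (hSa : ∀ x ∈ S, x + a ∈ T) :
    translationDiff μ v p S (a + b) ≤
      2 ^ (p - 1) * (translationDiff μ v p T b + translationDiff μ v p T a) := by
  have hmeas : Measurable fun x => ENNReal.ofReal (|v (x + a + b) - v (x + a)| ^ p) :=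
    (((hv.comp ((measurable_add_const a).add_const b)).sub
      (hv.comp (measurable_add_const a))).abs.pow_const p).ennreal_ofReal
  calc translationDiff μ v p S (a + b)
      ≤ ∫⁻ x in S, 2 ^ (p - 1) * (ENNReal.ofReal (|v (x + a + b) - v (x + a)| ^ p) +
          ENNReal.ofReal (|v (x + a) - v x| ^ p)) ∂μ :=
        lintegral_mono fun x => by
          simpa only [add_assoc] using ENNReal.ofReal_abs_sub_rpow_le hp _ (v (x + a)) _
    _ = 2 ^ (p - 1) * (∫⁻ x in S, ENNReal.ofReal (|v (x + a + b) - v (x + a)| ^ p) ∂μ +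
          translationDiff μ v p S a) := by
        rw [lintegral_const_mul' _ _ (by simp), lintegral_add_left hmeas, translationDiff]
    _ ≤ _ := by
        gcongr
        · exact setLIntegral_comp_add_right_le a hSa
            fun x => ENNReal.ofReal (|v (x + b) - v x| ^ p)
        · exact translationDiff_mono_set hST a

theorem translationDiff_add_self_le [MeasurableAdd E] [μ.IsAddRightInvariant]
    (hv : Measurable v) (hp : 1 ≤ p) (S : Set E) (a : E) :
    translationDiff μ v p S (a + a) ≤ 2 ^ p * translationDiff μ v p (cthickening ‖a‖ S) a := by
  refine (translationDiff_add_le hv hp (self_subset_cthickening S) a a fun x hx => ?_).trans_eq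
    (ENNReal.two_rpow_sub_one_mul_add_self p _)
  simpa using add_mem_cthickening (mem_cthickening_of_dist_le x x 0 S hx (by simp)) le_rfl
    (y := a) (r' := ‖a‖) (by simp)

theorem translationDiff_two_pow_nsmul_le [MeasurableAdd E] [μ.IsAddRightInvariant]
    (hv : Measurable v) (hp : 1 ≤ p) (S : Set E) (m : ℕ) (w : E) :
    translationDiff μ v p S (2 ^ m • w) ≤
      (2 ^ p) ^ m * translationDiff μ v p (cthickening ((2 ^ m - 1) * ‖w‖) S) w := by
  induction m generalizing w with
  | zero => simpa using translationDiff_mono_set subset_closure w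
  | succ m ih =>
    have hm : (1 : ℝ) ≤ 2 ^ m := one_le_pow₀ one_le_two
    have hr : 0 ≤ ((2 : ℝ) ^ m - 1) * ‖w + w‖ := mul_nonneg (sub_nonneg.2 hm) (norm_nonneg _)
    calc translationDiff μ v p S (2 ^ (m + 1) • w)
        = translationDiff μ v p S (2 ^ m • (w + w)) := by
          rw [pow_succ, mul_nsmul, two_nsmul, smul_add]
      _ ≤ (2 ^ p) ^ m * (2 ^ p * translationDiff μ v p
            (cthickening ‖w‖ (cthickening ((2 ^ m - 1) * ‖w + w‖) S)) w) :=
          (ih (w + w)).trans (by gcongr; exact translationDiff_add_self_le hv hp _ w)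
      _ ≤ _ := by
          rw [← mul_assoc, ← pow_succ]
          gcongr
          refine translationDiff_mono_set
            ((cthickening_cthickening_subset (norm_nonneg w) hr S).trans (cthickening_mono ?_ S)) w
          have := mul_le_mul_of_nonneg_left (norm_add_le w w) (sub_nonneg.2 hm)
          rw [pow_succ]
          linarith

theorem measure_ball_mul_translationDiff_le [BorelSpace E] [MeasurableAdd₂ E] [SFinite μ]
    [μ.IsAddLeftInvariant] [μ.IsNegInvariant] (hv : Measurable v) (hp : 1 ≤ p)
    {S T : Set E} (hST : S ⊆ T) (c : E) (r : ℝ) (hT : ∀ y ∈ ball c r, ∀ x ∈ S, x + y ∈ T) :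
    μ (ball c r) * translationDiff μ v p S (c + c) ≤
      2 ^ p * ∫⁻ y in ball c r, translationDiff μ v p T y ∂μ := by
  have hreflect : ∫⁻ y in ball c r, translationDiff μ v p T (c + c - y) ∂μ =
      ∫⁻ y in ball c r, translationDiff μ v p T y ∂μ := by
    have hpre : (c + c - ·) ⁻¹' ball c r = ball c r := by
      ext y
      simp only [Set.mem_preimage, mem_ball, dist_eq_norm]
      rw [show c + c - y - c = -(y - c) by abel, norm_neg]
    conv_lhs => rw [← hpre]
    exact (Measure.measurePreserving_sub_left μ (c + c)).setLIntegral_comp_preimage_emb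
      (MeasurableEquiv.subLeft (c + c)).measurableEmbedding _ _
  calc μ (ball c r) * translationDiff μ v p S (c + c)
      = ∫⁻ _ in ball c r, translationDiff μ v p S (c + c) ∂μ := by
        rw [setLIntegral_const, mul_comm]
    _ ≤ ∫⁻ y in ball c r, 2 ^ (p - 1) *
          (translationDiff μ v p T (c + c - y) + translationDiff μ v p T y) ∂μ :=
        setLIntegral_mono' measurableSet_ball fun y hy => by
          simpa using translationDiff_add_le hv hp hST y (c + c - y) (hT y hy)
    _ = 2 ^ p * ∫⁻ y in ball c r, translationDiff μ v p T y ∂μ := by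
        rw [lintegral_const_mul' _ _ (by simp),
          lintegral_add_right _ (measurable_translationDiff hv T), hreflect,
          ENNReal.two_rpow_sub_one_mul_add_self]

end TranslationDiff

noncomputable def dyadicBall {E : Type*} [NormedAddCommGroup E] [NormedSpace ℝ E] (h : E)
    (m : ℕ) : Set E :=
  ball ((2⁻¹ : ℝ) ^ (m + 1) • h) ((2⁻¹ : ℝ) ^ m * ‖h‖ / 8)

section Dyadic

variable {E : Type*} [NormedAddCommGroup E] [NormedSpace ℝ E]

theorem norm_mem_Ioo_of_mem_dyadicBall {h y : E} {m : ℕ} (hy : y ∈ dyadicBall h m) :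
    3 / 8 * ((2⁻¹ : ℝ) ^ m * ‖h‖) < ‖y‖ ∧ ‖y‖ < 5 / 8 * ((2⁻¹ : ℝ) ^ m * ‖h‖) := by
  have hc : ‖(2⁻¹ : ℝ) ^ (m + 1) • h‖ = (2⁻¹ : ℝ) ^ m * ‖h‖ / 2 := by
    rw [norm_smul, norm_pow, norm_inv, Real.norm_two, pow_succ]
    ring
  rw [dyadicBall, mem_ball_iff_norm] at hy
  have h₁ := norm_sub_norm_le y ((2⁻¹ : ℝ) ^ (m + 1) • h)
  have h₂ := norm_sub_norm_le ((2⁻¹ : ℝ) ^ (m + 1) • h) y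
  rw [norm_sub_rev] at h₂
  constructor <;> linarith

theorem pairwise_disjoint_dyadicBall (h : E) :
    Pairwise (Function.onFun Disjoint (dyadicBall h)) := by
  refine (pairwise_disjoint_on _).2 fun i j hij => Set.disjoint_left.2 fun y hi hj => ?_
  have hpow : (2⁻¹ : ℝ) ^ j * ‖h‖ ≤ (2⁻¹ : ℝ) ^ i * ‖h‖ / 2 := by
    rw [div_eq_mul_inv, mul_right_comm, ← pow_succ]
    exact mul_le_mul_of_nonneg_right (pow_right_anti₀ (by norm_num) (by norm_num) hij)
      (norm_nonneg h)
  linarith [norm_mem_Ioo_of_mem_dyadicBall hi, norm_mem_Ioo_of_mem_dyadicBall hj]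

theorem dyadicBall_subset_ball (h : E) (m : ℕ) : dyadicBall h m ⊆ ball 0 ‖h‖ := fun y hy => by
  have hpow : (2⁻¹ : ℝ) ^ m * ‖h‖ ≤ ‖h‖ :=
    mul_le_of_le_one_left (norm_nonneg h) (pow_le_one₀ (by norm_num) (by norm_num))
  rw [mem_ball_zero_iff]
  linarith [norm_mem_Ioo_of_mem_dyadicBall hy]

end Dyadic

theorem two_rpow_pow_mul_rpow_eq {p s R : ℝ} (hR : 0 < R) (d m : ℕ) :
    (2 ^ p) ^ m * 2 ^ p * ((2⁻¹ : ℝ) ^ m * R) ^ (d + s * p) =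
      ((2⁻¹ : ℝ) ^ m * R / 8) ^ d *
        ((2 ^ (p * (1 - s))) ^ m * (2 ^ p * 8 ^ d * R ^ (s * p))) := by
  have hq : 0 < (2⁻¹ : ℝ) ^ m := by positivity
  have hθ : (2 : ℝ) ^ (p * (1 - s)) = 2 ^ p * (2 ^ (s * p))⁻¹ := by
    rw [← Real.rpow_neg zero_le_two, ← Real.rpow_add two_pos]
    ring_nf
  rw [Real.rpow_add (mul_pos hq hR), Real.rpow_natCast, Real.mul_rpow hq.le hR.le,
    ← Real.rpow_pow_comm (by norm_num), Real.inv_rpow zero_le_two, hθ, mul_pow, div_pow]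
  have : (0 : ℝ) < 2 ^ (s * p) := by positivity
  field_simp
  ring

section Gagliardo

open Module

variable {E : Type*} [NormedAddCommGroup E] [NormedSpace ℝ E] [FiniteDimensional ℝ E]
  [MeasurableSpace E] [BorelSpace E] {μ : Measure E} [μ.IsAddHaarMeasure] {v : E → ℝ}
  {p s : ℝ}

theorem measure_dyadicBall_mul_translationDiff_le (hv : Measurable v) (hp : 1 ≤ p)
    (A : Set E) (h : E) (m : ℕ) :
    μ (dyadicBall h m) * translationDiff μ v p A h ≤
      (2 ^ p) ^ m *
        (2 ^ p * ∫⁻ y in dyadicBall h m, translationDiff μ v p (cthickening ‖h‖ A) y ∂μ) := by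
  set r := (2⁻¹ : ℝ) ^ m * ‖h‖ with hr
  set c := (2⁻¹ : ℝ) ^ (m + 1) • h
  have hpow : (2 : ℝ) ^ m * 2⁻¹ ^ m = 1 := by
    rw [← mul_pow, mul_inv_cancel₀ two_ne_zero, one_pow]
  have hcc : c + c = (2⁻¹ : ℝ) ^ m • h := by
    rw [← two_smul ℝ c, smul_smul, pow_succ]
    congr 1
    ring
  have hcc_norm : ‖c + c‖ = r := by rw [hcc, norm_smul, norm_pow, norm_inv, Real.norm_two]
  have hh : 2 ^ m • (c + c) = h := by
    rw [hcc, ← Nat.cast_smul_eq_nsmul ℝ, smul_smul]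
    push_cast
    rw [hpow, one_smul]
  have hthick : (2 ^ m - 1) * r + r = ‖h‖ := by
    rw [hr]
    linear_combination ‖h‖ * hpow
  have hr₀ : 0 ≤ r := by rw [hr]; positivity
  have hr₁ : 0 ≤ (2 ^ m - 1) * r := mul_nonneg (sub_nonneg.2 (one_le_pow₀ one_le_two)) hr₀
  calc μ (dyadicBall h m) * translationDiff μ v p A h
      ≤ μ (dyadicBall h m) *
          ((2 ^ p) ^ m * translationDiff μ v p (cthickening ((2 ^ m - 1) * r) A) (c + c)) := by
        gcongr
        simpa only [hh, hcc_norm] using translationDiff_two_pow_nsmul_le hv hp A m (c + c)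
    _ = (2 ^ p) ^ m * (μ (ball c (r / 8)) *
          translationDiff μ v p (cthickening ((2 ^ m - 1) * r) A) (c + c)) := by
        rw [mul_left_comm, dyadicBall, mul_div_assoc]
    _ ≤ _ := by
        gcongr (2 ^ p) ^ m * ?_
        refine measure_ball_mul_translationDiff_le (μ := μ) (T := cthickening ‖h‖ A) hv hp
          (cthickening_mono (by linarith) A) c _ fun y hy x hx => add_mem_cthickening hx hr₁ ?_
        linarith [(norm_mem_Ioo_of_mem_dyadicBall hy).2]

theorem measure_ball_mul_translationDiff_le_lintegral_dyadicBall (hv : Measurable v)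
    (hp : 1 ≤ p) (hs : 0 ≤ s) (A : Set E) {h : E} (hh : h ≠ 0) (m : ℕ) :
    μ (ball 0 1) * translationDiff μ v p A h ≤
      ENNReal.ofReal (2 ^ (p * (1 - s))) ^ m *
        (ENNReal.ofReal (2 ^ p * 8 ^ finrank ℝ E * ‖h‖ ^ (s * p)) *
          ∫⁻ y in dyadicBall h m, translationDiff μ v p (cthickening ‖h‖ A) y /
            ENNReal.ofReal (‖y‖ ^ (finrank ℝ E + s * p)) ∂μ) := by
  set r := (2⁻¹ : ℝ) ^ m * ‖h‖ with hr_def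
  set G := fun y => translationDiff μ v p (cthickening ‖h‖ A) y /
    ENNReal.ofReal (‖y‖ ^ (finrank ℝ E + s * p))
  have hr : 0 < r := by positivity
  have hvol : μ (dyadicBall h m) = ENNReal.ofReal ((r / 8) ^ finrank ℝ E) * μ (ball 0 1) :=
    Measure.addHaar_ball_of_pos μ _ (by positivity)
  have hweight := setLIntegral_le_ofReal_rpow_mul_setLIntegral_div (μ := μ)
    (measurableSet_ball : MeasurableSet (dyadicBall h m)) (r := r)
    (α := finrank ℝ E + s * p) (by positivity)
    (fun y hy => by constructor <;> linarith [norm_mem_Ioo_of_mem_dyadicBall hy, hr_def])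
    (translationDiff μ v p (cthickening ‖h‖ A))
  have h2 : (2 : ℝ≥0∞) ^ p = ENNReal.ofReal (2 ^ p) := by
    rw [← ENNReal.ofReal_rpow_of_pos two_pos, ENNReal.ofReal_ofNat]
  refine (ENNReal.mul_le_mul_iff_right (a := ENNReal.ofReal ((r / 8) ^ finrank ℝ E))
    (by simp; positivity) ENNReal.ofReal_ne_top).1 ?_
  calc ENNReal.ofReal ((r / 8) ^ finrank ℝ E) * (μ (ball 0 1) * translationDiff μ v p A h)
      = μ (dyadicBall h m) * translationDiff μ v p A h := by rw [hvol, mul_assoc]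
    _ ≤ (2 ^ p) ^ m * (2 ^ p * (ENNReal.ofReal (r ^ (finrank ℝ E + s * p)) *
          ∫⁻ y in dyadicBall h m, G y ∂μ)) :=
        (measure_dyadicBall_mul_translationDiff_le hv hp A h m).trans (by gcongr; exact hweight)
    _ = ENNReal.ofReal ((2 ^ p) ^ m * 2 ^ p * r ^ (finrank ℝ E + s * p)) *
          ∫⁻ y in dyadicBall h m, G y ∂μ := by
        rw [h2, ENNReal.ofReal_mul (by positivity), ENNReal.ofReal_mul (by positivity),
          ENNReal.ofReal_pow (by positivity)]
        ring
    _ = _ := by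
        rw [two_rpow_pow_mul_rpow_eq (norm_pos_iff.2 hh), ENNReal.ofReal_mul (by positivity),
          ENNReal.ofReal_mul (by positivity), ENNReal.ofReal_pow (by positivity),
          ENNReal.ofReal_pow (by positivity)]
        ring

theorem measure_ball_mul_translationDiff_le_lintegral_ball (hv : Measurable v) (hp : 1 < p)
    (hs : s ∈ Set.Ioo 0 1) (A : Set E) {h : E} (hh : h ≠ 0) :
    μ (ball 0 1) * translationDiff μ v p A h ≤
      ENNReal.ofReal (1 - (2 ^ (p * (1 - s)))⁻¹) *
        (ENNReal.ofReal (2 ^ p * 8 ^ finrank ℝ E * ‖h‖ ^ (s * p)) *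
          ∫⁻ y in ball 0 ‖h‖, translationDiff μ v p (cthickening ‖h‖ A) y /
            ENNReal.ofReal (‖y‖ ^ (finrank ℝ E + s * p)) ∂μ) := by
  set G := fun y => translationDiff μ v p (cthickening ‖h‖ A) y /
    ENNReal.ofReal (‖y‖ ^ (finrank ℝ E + s * p))
  have hθ₀ : (0 : ℝ) < 2 ^ (p * (1 - s)) := by positivity
  have hθ : 1 < ENNReal.ofReal (2 ^ (p * (1 - s))) := by
    rw [← ENNReal.ofReal_one, ENNReal.ofReal_lt_ofReal_iff hθ₀]
    exact Real.one_lt_rpow one_lt_two (mul_pos (by linarith) (by linarith [hs.2]))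
  have hsum : ∑' m, ∫⁻ y in dyadicBall h m, G y ∂μ ≤ ∫⁻ y in ball 0 ‖h‖, G y ∂μ :=
    calc ∑' m, ∫⁻ y in dyadicBall h m, G y ∂μ = ∫⁻ y in ⋃ m, dyadicBall h m, G y ∂μ :=
          (lintegral_iUnion (fun _ => measurableSet_ball) (pairwise_disjoint_dyadicBall h) G).symm
      _ ≤ ∫⁻ y in ball 0 ‖h‖, G y ∂μ :=
          lintegral_mono_set (Set.iUnion_subset (dyadicBall_subset_ball h))
  refine (ENNReal.le_mul_tsum_of_le_pow_mul hθ ENNReal.ofReal_ne_top _ fun m =>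
    measure_ball_mul_translationDiff_le_lintegral_dyadicBall hv hp.le hs.1.le A hh m).trans ?_
  rw [ENNReal.tsum_mul_left, ← ENNReal.ofReal_inv_of_pos hθ₀, ← ENNReal.ofReal_one,
    ← ENNReal.ofReal_sub _ (by positivity)]
  gcongr

theorem translationDiff_le_mul_lintegral_ball (hv : Measurable v) (hp : 1 < p)
    (hs : s ∈ Set.Ioo 0 1) (A : Set E) (h : E) :
    translationDiff μ v p A h ≤
      ENNReal.ofReal (2 ^ p * 8 ^ finrank ℝ E * (p * Real.log 2) / (μ (ball 0 1)).toReal *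
          ‖h‖ ^ (s * p) * (1 - s)) *
        ∫⁻ y in ball 0 ‖h‖, translationDiff μ v p (cthickening ‖h‖ A) y /
          ENNReal.ofReal (‖y‖ ^ (finrank ℝ E + s * p)) ∂μ := by
  rcases eq_or_ne h 0 with rfl | hh
  · simp [translationDiff, Real.zero_rpow (by linarith : p ≠ 0)]
  set M := μ (ball 0 1)
  set θ : ℝ := 2 ^ (p * (1 - s))
  set K : ℝ := 2 ^ p * 8 ^ finrank ℝ E * ‖h‖ ^ (s * p)
  set I := ∫⁻ y in ball 0 ‖h‖, translationDiff μ v p (cthickening ‖h‖ A) y /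
    ENNReal.ofReal (‖y‖ ^ (finrank ℝ E + s * p)) ∂μ
  have hM₀ : M ≠ 0 := (measure_ball_pos μ 0 one_pos).ne'
  have hM : M ≠ ⊤ := measure_ball_lt_top.ne
  have hθ : 0 ≤ 1 - θ⁻¹ :=
    sub_nonneg.2 (inv_le_one_of_one_le₀ (Real.one_le_rpow one_le_two (by nlinarith [hs.2])))
  refine (ENNReal.mul_le_mul_iff_right hM₀ hM).1
    ((measure_ball_mul_translationDiff_le_lintegral_ball hv hp hs A hh).trans ?_)
  have hM' : 0 < M.toReal := ENNReal.toReal_pos hM₀ hM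
  calc ENNReal.ofReal (1 - θ⁻¹) * (ENNReal.ofReal K * I)
      = ENNReal.ofReal ((1 - θ⁻¹) * K) * I := by rw [ENNReal.ofReal_mul hθ, mul_assoc]
    _ ≤ ENNReal.ofReal (M.toReal * (2 ^ p * 8 ^ finrank ℝ E * (p * Real.log 2) / M.toReal *
          ‖h‖ ^ (s * p) * (1 - s))) * I := by
        gcongr ENNReal.ofReal ?_ * _
        calc (1 - θ⁻¹) * K ≤ Real.log 2 * (p * (1 - s)) * K :=
              mul_le_mul_of_nonneg_right (Real.one_sub_inv_rpow_le two_pos _) (by positivity)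
          _ = _ := by
              simp only [K]
              field_simp
    _ = _ := by rw [ENNReal.ofReal_mul ENNReal.toReal_nonneg, ENNReal.ofReal_toReal hM, mul_assoc]

end Gagliardo

theorem stmt_17_general (n : ℕ) (p : ℝ) (hp : 1 < p)
    (v : EuclideanSpace ℝ (Fin n) → ℝ) (hv : Measurable v)
    (Ω' : Set (EuclideanSpace ℝ (Fin n))) :
    ∃ C : ℝ, 0 < C ∧ ∀ s : ℝ, s ∈ Set.Ioo (0:ℝ) 1 → ∀ h : EuclideanSpace ℝ (Fin n),
      (∫⁻ x in Ω', ENNReal.ofReal (|v (x + h) - v x| ^ p)) ≤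
        ENNReal.ofReal (C * ‖h‖ ^ (s * p) * (1 - s)) *
          ∫⁻ y in ball (0 : EuclideanSpace ℝ (Fin n)) ‖h‖,
            (∫⁻ x in cthickening ‖h‖ Ω', ENNReal.ofReal (|v (x + y) - v x| ^ p)) /
              ENNReal.ofReal (‖y‖ ^ ((n : ℝ) + s * p)) := by
  have hM : 0 < (volume (ball (0 : EuclideanSpace ℝ (Fin n)) 1)).toReal :=
    ENNReal.toReal_pos (measure_ball_pos volume 0 one_pos).ne' measure_ball_lt_top.ne
  have hlog := Real.log_pos one_lt_two
  refine ⟨2 ^ p * 8 ^ n * (p * Real.log 2) /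
    (volume (ball (0 : EuclideanSpace ℝ (Fin n)) 1)).toReal, by positivity, fun s hs h => ?_⟩
  have key := translationDiff_le_mul_lintegral_ball (μ := volume) hv hp hs Ω' h
  rwa [finrank_euclideanSpace_fin] at key

/-- Quantitative translation estimate with the `(1-s)` normalization: for a
constant independent of `s`,
`‖τ_h v - v‖_{L^p(Ω')}^p ≤ C |h|^{sp} (1-s) ∫_{B_{|h|}} ‖τ_y v - v‖^p_{L^p(Ω'_{|h|})} |y|^{-(n+sp)} dy`. -/
theorem stmt_17 (n : ℕ) (hn : 1 ≤ n) (p : ℝ) (hp : 1 < p)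
    (v : EuclideanSpace ℝ (Fin n) → ℝ) (hv : Measurable v)
    (hvLp : MemLp v (ENNReal.ofReal p) volume)
    (Ω' : Set (EuclideanSpace ℝ (Fin n))) (hΩ'o : IsOpen Ω')
    (hΩ'b : Bornology.IsBounded Ω') :
    ∃ C : ℝ, 0 < C ∧ ∀ s : ℝ, s ∈ Set.Ioo (0:ℝ) 1 → ∀ h : EuclideanSpace ℝ (Fin n),
      (∫⁻ x in Ω', ENNReal.ofReal (|v (x + h) - v x| ^ p)) ≤
        ENNReal.ofReal (C * ‖h‖ ^ (s * p) * (1 - s)) *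
          ∫⁻ y in ball (0 : EuclideanSpace ℝ (Fin n)) ‖h‖,
            (∫⁻ x in cthickening ‖h‖ Ω', ENNReal.ofReal (|v (x + y) - v x| ^ p)) /
              ENNReal.ofReal (‖y‖ ^ ((n : ℝ) + s * p)) :=
  stmt_17_general n p hp v hv Ω'
end
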